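/- For every i ∈ {1,…,N}, the square of the intertwiner satisfies K_i² = k_i² − (D^{α_i^∨})² as linear operators on ℂ[P]. -/

import Mathlib

open scoped BigOperators RealInnerProductSpace
open Classical MeasureTheory

noncomputable section
set_option linter.unusedSectionVars false

namespace HO

variable {V : Type*} [NormedAddCommGroup V] [InnerProductSpace ℝ V] [FiniteDimensional ℝ V]

/-- The coroot `α^∨ = 2α/⟨α,α⟩` of a vector `α`. -/
def coroot (α : V) : V := (2 / ⟪α, α⟫) • α

/-- The orthogonal reflection `s_α(v) = v - ⟨α^∨,v⟩ α`. -/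
def sRefl (α : V) : V → V := fun v => v - ⟪coroot α, v⟫ • α

lemma inner_coroot_self {α : V} (hα : α ≠ 0) : ⟪coroot α, α⟫ = 2 := by
  have h : ⟪α, α⟫ ≠ 0 := inner_self_ne_zero.2 hα
  simp [coroot, real_inner_smul_left]
  field_simp

lemma sRefl_add (α u v : V) : sRefl α (u + v) = sRefl α u + sRefl α v := by
  simp only [sRefl, inner_add_right, add_smul]; abel

lemma sRefl_smul (α : V) (c : ℝ) (v : V) : sRefl α (c • v) = c • sRefl α v := by
  simp only [sRefl, inner_smul_right, smul_sub, smul_smul]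

lemma sRefl_sub (α u v : V) : sRefl α (u - v) = sRefl α u - sRefl α v := by
  simp only [sRefl, inner_sub_right, sub_smul]; abel

lemma sRefl_zero_arg (α : V) : sRefl α 0 = 0 := by simp [sRefl]

lemma inner_sRefl (α u v : V) : ⟪sRefl α u, v⟫ = ⟪u, sRefl α v⟫ := by
  simp only [sRefl, inner_sub_left, inner_sub_right, real_inner_smul_left,
    real_inner_smul_right, coroot]
  rw [← real_inner_comm u α]
  ring

lemma sRefl_invol {α : V} (hα : α ≠ 0) : Function.Involutive (sRefl α) := by
  intro v
  simp only [sRefl, inner_sub_right, inner_smul_right, inner_coroot_self hα]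
  module

lemma sRefl_self {α : V} (hα : α ≠ 0) : sRefl α α = -α := by
  simp only [sRefl, inner_coroot_self hα]; module

lemma inner_sRefl_sRefl {α : V} (hα : α ≠ 0) (u v : V) :
    ⟪sRefl α u, sRefl α v⟫ = ⟪u, v⟫ := by
  rw [inner_sRefl, sRefl_invol hα]

lemma coroot_sRefl {α : V} (hα : α ≠ 0) (β : V) :
    coroot (sRefl α β) = sRefl α (coroot β) := by
  rw [coroot, inner_sRefl_sRefl hα, coroot, sRefl_smul]

lemma sRefl_coroot {α : V} (hα : α ≠ 0) : sRefl α (coroot α) = - coroot α := by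
  rw [← coroot_sRefl hα, sRefl_self hα, coroot, coroot, inner_neg_neg, smul_neg]

lemma sRefl_conj {α : V} (hα : α ≠ 0) (β v : V) :
    sRefl α (sRefl β (sRefl α v)) = sRefl (sRefl α β) v := by
  have h1 : sRefl (sRefl α β) v = v - ⟪coroot β, sRefl α v⟫ • (sRefl α β) := by
    rw [sRefl, coroot_sRefl hα, inner_sRefl]
  rw [h1]
  show sRefl α (sRefl α v - ⟪coroot β, sRefl α v⟫ • β) = _
  rw [sRefl_sub, sRefl_invol hα, sRefl_smul]


/-- Data of an irreducible reduced crystallographic root system `R` in the Euclidean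
space `V`, with a fixed basis of simple roots `simple : Fin N → V` and the corresponding
set of positive roots `Rplus`. -/
structure RootSystemData (V : Type*) [NormedAddCommGroup V] [InnerProductSpace ℝ V]
    [FiniteDimensional ℝ V] (N : ℕ) : Type _ where
  R : Finset V
  Rplus : Finset V
  simple : Fin N → V
  nonzero : ∀ α ∈ R, α ≠ 0
  Rplus_subset : Rplus ⊆ R
  decomp : ∀ α ∈ R, (α ∈ Rplus ∧ -α ∉ Rplus) ∨ (α ∉ Rplus ∧ -α ∈ Rplus)
  simple_mem : ∀ i, simple i ∈ Rplus
  simple_li : LinearIndependent ℝ simple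
  simple_span : Submodule.span ℝ (Set.range simple) = ⊤
  pos_combo : ∀ α ∈ Rplus, ∃ c : Fin N → ℕ, α = ∑ i, (c i : ℝ) • simple i
  reflect_mem : ∀ α ∈ R, ∀ β ∈ R, sRefl α β ∈ R
  crystal : ∀ α ∈ R, ∀ β ∈ R, ∃ n : ℤ, ⟪coroot α, β⟫ = (n : ℝ)
  reduced : ∀ α ∈ R, ∀ c : ℝ, c • α ∈ R → c = 1 ∨ c = -1
  irreducible : ∀ S : Finset V, S ⊆ R → (∀ α ∈ S, ∀ β ∈ R, β ∉ S → ⟪α, β⟫ = 0) →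
    S = ∅ ∨ S = R

namespace RootSystemData

variable {N : ℕ} (Δ : RootSystemData V N)

/-- The Weyl group `W`, generated by the reflections in the roots. -/
def weylGroup : Subgroup (V ≃ₗ[ℝ] V) :=
  Subgroup.closure {g : V ≃ₗ[ℝ] V | ∃ α ∈ Δ.R, ⇑g = sRefl α}

/-- The Weyl orbit `W(μ)` of a weight `μ`. -/
def orbit (μ : V) : Set V := {ν | ∃ w ∈ Δ.weylGroup, w μ = ν}

/-- The weight lattice `P = {μ : ⟨α^∨,μ⟩ ∈ ℤ for all α ∈ R}`. -/
def Pset : Set V := {μ | ∀ α ∈ Δ.R, ∃ n : ℤ, ⟪coroot α, μ⟫ = (n : ℝ)}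

/-- Dominance: `⟨α^∨,μ⟩ ≥ 0` for all positive roots `α`. -/
def IsDominant (μ : V) : Prop := ∀ α ∈ Δ.Rplus, 0 ≤ ⟪coroot α, μ⟫

/-- Membership in the set of dominant weights `P_+`. -/
def IsDomWeight (μ : V) : Prop := μ ∈ Δ.Pset ∧ Δ.IsDominant μ

/-- Half the sum of the positive roots. -/
def rho : V := (1/2 : ℝ) • ∑ α ∈ Δ.Rplus, α

/-- Membership in the regular dominant weights `P_{++} = P_+ + ρ`. -/
def IsRegDomWeight (μ : V) : Prop := ∃ ν : V, Δ.IsDomWeight ν ∧ μ = ν + Δ.rho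

/-- The deformed half-sum `ρ_k = (1/2) Σ_{α ∈ R_+} k_α α`. -/
def rhok (k : V → ℝ) : V := (1/2 : ℝ) • ∑ α ∈ Δ.Rplus, k α • α

/-- `W`-invariance of the multiplicity parameters. -/
def WInvPar {X : Type*} (k : V → X) : Prop :=
  ∀ w ∈ Δ.weylGroup, ∀ α ∈ Δ.R, k (w α) = k α

/-- `R_w^∨` (indexed by the positive roots `α` with `w(α) ∈ -R_+`). -/
def RwD (w : V ≃ₗ[ℝ] V) : Finset V := Δ.Rplus.filter (fun α => -(w α) ∈ Δ.Rplus)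

/-- The length of a Weyl group element, `l(w) = |R_w^∨|`. -/
def len (w : V ≃ₗ[ℝ] V) : ℕ := (Δ.RwD w).card

/-- `w` is a/the shortest Weyl group element with `w(μ⁺) = μ`. -/
def shortestTo (μp μ : V) (w : V ≃ₗ[ℝ] V) : Prop :=
  w ∈ Δ.weylGroup ∧ w μp = μ ∧ ∀ u ∈ Δ.weylGroup, u μp = μ → Δ.len w ≤ Δ.len u

/-- The order `ν ≤ μ` : `μ - ν` is a nonnegative integer combination of simple roots. -/
def le' (ν μ : V) : Prop := ∃ c : Fin N → ℕ, μ - ν = ∑ i, (c i : ℝ) • Δ.simple i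

/-- `μp` is the dominant representative of the Weyl orbit of `μ`. -/
def domRep (μ μp : V) : Prop := Δ.IsDominant μp ∧ μp ∈ Δ.orbit μ

/-- The order `ν ≺ μ`. -/
def prec (ν μ : V) : Prop :=
  ν ≠ μ ∧ ∃ νp μp : V, Δ.domRep ν νp ∧ Δ.domRep μ μp ∧
    ((νp ≠ μp ∧ Δ.le' νp μp) ∨ (νp = μp ∧ Δ.le' ν μ))

/-- `v = ρ_k(μ) = w_μ(ρ_k)` where `w_μ` is the shortest Weyl element with
`w_μ(μ⁺) = μ`, `μ⁺` the dominant representative of the orbit of `μ`. -/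
def IsRhokAt (k : V → ℝ) (μ v : V) : Prop :=
  ∃ (μp : V) (w : V ≃ₗ[ℝ] V), Δ.IsDomWeight μp ∧ Δ.shortestTo μp μ w ∧ v = w (Δ.rhok k)

end RootSystemData

/-- The group algebra `ℂ[V]`, containing `ℂ[P]` as the elements supported on `P`. -/
abbrev GA (V : Type*) [AddCommGroup V] := AddMonoidAlgebra ℂ V

/-- The basis element `x^μ` of the group algebra. -/
def Xp {V : Type*} [AddCommGroup V] (μ : V) : GA V := AddMonoidAlgebra.ofCoeff (Finsupp.single μ 1)

/-- The action of a map `V → V` (e.g. a Weyl group element or a reflection) on the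
group algebra, `w(x^μ) = x^{w(μ)}`. -/
def actA (w : V → V) : GA V → GA V := fun f => AddMonoidAlgebra.ofCoeff (Finsupp.mapDomain w f.coeff)

/-- The derivation `∂^λ`, with `∂^λ(x^μ) = ⟨λ,μ⟩ x^μ`. -/
def pd (lam : V) (f : GA V) : GA V :=
  f.coeff.sum fun μ c => AddMonoidAlgebra.ofCoeff (Finsupp.single μ ((⟪lam, μ⟫ : ℝ) * c))

lemma actA_apply {w : V → V} (hw : Function.Involutive w) (f : GA V) (ν : V) :
    (actA w f).coeff ν = f.coeff (w ν) := by
  conv_lhs => rw [← hw ν]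
  exact Finsupp.mapDomain_apply hw.injective f.coeff (w ν)

lemma actA_actA {w : V → V} (hw : Function.Involutive w) (f : GA V) :
    actA w (actA w f) = f := by
  ext ν; rw [actA_apply hw, actA_apply hw, hw]

lemma actA_sub {w : V → V} (hw : Function.Involutive w) (f g : GA V) :
    actA w (f - g) = actA w f - actA w g := by
  ext ν
  rw [actA_apply hw, AddMonoidAlgebra.coeff_sub, Finsupp.sub_apply, AddMonoidAlgebra.coeff_sub,
    Finsupp.sub_apply, actA_apply hw, actA_apply hw]

lemma actA_add {w : V → V} (hw : Function.Involutive w) (f g : GA V) :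
    actA w (f + g) = actA w f + actA w g := by
  ext ν
  rw [actA_apply hw, AddMonoidAlgebra.coeff_add, Finsupp.add_apply, AddMonoidAlgebra.coeff_add,
    Finsupp.add_apply, actA_apply hw, actA_apply hw]

lemma actA_smul {w : V → V} (hw : Function.Involutive w) (c : ℂ) (f : GA V) :
    actA w (c • f) = c • actA w f := by
  ext ν
  rw [actA_apply hw, AddMonoidAlgebra.coeff_smul, Finsupp.smul_apply, AddMonoidAlgebra.coeff_smul,
    Finsupp.smul_apply, actA_apply hw]

lemma actA_neg {w : V → V} (hw : Function.Involutive w) (f : GA V) :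
    actA w (-f) = - actA w f := by
  ext ν
  rw [actA_apply hw, AddMonoidAlgebra.coeff_neg, Finsupp.neg_apply, AddMonoidAlgebra.coeff_neg,
    Finsupp.neg_apply, actA_apply hw]

lemma actA_sum {w : V → V} (hw : Function.Involutive w) {ι : Type*} (S : Finset ι)
    (F : ι → GA V) : actA w (∑ β ∈ S, F β) = ∑ β ∈ S, actA w (F β) := by
  ext ν
  rw [actA_apply hw, AddMonoidAlgebra.coeff_sum, Finsupp.finset_sum_apply, AddMonoidAlgebra.coeff_sum,
    Finsupp.finset_sum_apply]
  exact Finset.sum_congr rfl fun β _ => (actA_apply hw (F β) ν).symm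

lemma pd_apply (lam : V) (f : GA V) (ν : V) : (pd lam f).coeff ν = (⟪lam, ν⟫ : ℝ) * f.coeff ν := by
  rw [pd, AddMonoidAlgebra.coeff_finsuppSum, Finsupp.sum_apply, Finsupp.sum]
  rw [Finset.sum_eq_single ν (fun b _ hb => by simp [AddMonoidAlgebra.coeff_ofCoeff, Finsupp.single_apply, hb])
    (fun h => by simp [Finsupp.notMem_support_iff.1 h])]
  simp

lemma pd_neg_lam (lam : V) (f : GA V) : pd (-lam) f = - pd lam f := by
  ext ν
  rw [pd_apply, AddMonoidAlgebra.coeff_neg, Finsupp.neg_apply, pd_apply, inner_neg_left]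
  push_cast; ring

lemma actA_pd {α : V} (hα : α ≠ 0) (lam : V) (f : GA V) :
    actA (sRefl α) (pd lam f) = pd (sRefl α lam) (actA (sRefl α) f) := by
  ext ν
  rw [actA_apply (sRefl_invol hα), pd_apply, pd_apply, actA_apply (sRefl_invol hα),
    ← inner_sRefl]

lemma Xp_sub_one_mul_apply (α : V) (g : GA V) (ν : V) :
    ((Xp α - 1) * g).coeff ν = g.coeff (ν - α) - g.coeff ν := by
  rw [sub_mul, one_mul, AddMonoidAlgebra.coeff_sub, Finsupp.sub_apply, Xp,
    AddMonoidAlgebra.ofCoeff_single, AddMonoidAlgebra.coeff_single_mul_apply]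
  rw [one_mul, neg_add_eq_sub]

lemma Xp_mul_Xp_neg (α : V) : Xp α * Xp (-α) = 1 := by
  rw [Xp, Xp, AddMonoidAlgebra.ofCoeff_single, AddMonoidAlgebra.ofCoeff_single,
    AddMonoidAlgebra.single_mul_single]
  simp [AddMonoidAlgebra.one_def]

lemma Xp_cancel {α : V} (hα : α ≠ 0) {u v : GA V}
    (h : (Xp α - 1) * u = (Xp α - 1) * v) : u = v := by
  have hd : ∀ d : GA V, (Xp α - 1) * d = 0 → d = 0 := by
    intro d hd0
    by_contra hne
    obtain ⟨μ, hμ, hmax⟩ := Finset.exists_max_image d.coeff.support (fun ν => (⟪α, ν⟫ : ℝ))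
      (Finsupp.support_nonempty_iff.2 fun h => hne (AddMonoidAlgebra.coeff_injective h))
    have h1 : d.coeff ((μ + α) - α) - d.coeff (μ + α) = 0 := by
      rw [← Xp_sub_one_mul_apply, hd0]; rfl
    have h2 : d.coeff (μ + α) = 0 := by
      by_contra h2
      have := hmax (μ + α) (Finsupp.mem_support_iff.2 h2)
      rw [inner_add_right] at this
      have hpos : (0:ℝ) < ⟪α, α⟫ :=
        real_inner_self_nonneg.lt_of_ne (Ne.symm (inner_self_ne_zero.2 hα))
      linarith
    rw [add_sub_cancel_right, h2, sub_zero] at h1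
    exact (Finsupp.mem_support_iff.1 hμ) h1
  have := hd (u - v) (by rw [mul_sub, h, sub_self])
  exact sub_eq_zero.1 this

/-- The additive-hom version of the reflection. -/
def sHom (α : V) : V →+ V := AddMonoidHom.mk' (sRefl α) (sRefl_add α)

lemma actA_mul (α : V) (u v : GA V) :
    actA (sRefl α) (u * v) = actA (sRefl α) u * actA (sRefl α) v := by
  show AddMonoidAlgebra.mapDomain (sHom α) (u * v)
    = AddMonoidAlgebra.mapDomain (sHom α) u * AddMonoidAlgebra.mapDomain (sHom α) v
  exact AddMonoidAlgebra.mapDomain_mul (sHom α) u v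

lemma actA_Xp (w : V → V) (μ : V) : actA w (Xp μ) = Xp (w μ) :=
  congrArg AddMonoidAlgebra.ofCoeff Finsupp.mapDomain_single

lemma actA_one (α : V) : actA (sRefl α) (1 : GA V) = 1 := by
  have : (1 : GA V) = Xp 0 := by rw [Xp, AddMonoidAlgebra.ofCoeff_single, AddMonoidAlgebra.one_def]
  rw [this, actA_Xp, sRefl_zero_arg]


namespace RootSystemData

variable {N : ℕ} (Δ : RootSystemData V N)

/-- Membership in `ℂ[P] ⊆ ℂ[V]`: the support lies in the weight lattice. -/
def InCP (f : GA V) : Prop := ↑f.coeff.support ⊆ Δ.Pset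

/-- `Dl` is the Dunkl–Cherednik operator `D^λ` on `ℂ[P]`:
`D^λ f = ∂^λ f + Σ_{α∈R_+} k_α ⟨λ,α⟩ (x^α-1)⁻¹(f - s_α f) + ⟨λ,ρ_k⟩ f`, where
`(x^α-1)⁻¹(f - s_α f)` denotes the unique `g` with `(x^α-1)·g = f - s_α f`. -/
def IsDC (k : V → ℝ) (lam : V) (Dl : GA V → GA V) : Prop :=
  ∀ f : GA V, Δ.InCP f →
    ∃ g : V → GA V,
      (∀ α ∈ Δ.Rplus, (Xp α - 1) * g α = f - actA (sRefl α) f) ∧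
      Dl f = pd lam f + ∑ α ∈ Δ.Rplus, ((k α * ⟪lam, α⟫ : ℝ) : ℂ) • g α
        + ((⟪lam, Δ.rhok k⟫ : ℝ) : ℂ) • f

/-- `F` is the nonsymmetric Heckman–Opdam polynomial `F_μ` (relative to the family of
Dunkl–Cherednik operators `D`): it is monic of top term `x^μ`, all lower terms are
`≺ μ`, and it is a joint eigenvector with eigenvalues `⟨λ, μ + ρ_k(μ)⟩`. -/
def IsHO (k : V → ℝ) (D : V → GA V → GA V) (μ : V) (F : GA V) : Prop :=
  Δ.InCP F ∧ F.coeff μ = 1 ∧ (∀ ν ∈ F.coeff.support, ν = μ ∨ Δ.prec ν μ) ∧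
    ∃ v : V, Δ.IsRhokAt k μ v ∧
      ∀ lam : V, D lam F = ((⟪lam, μ + v⟫ : ℝ) : ℂ) • F

/-- The intertwiner `K_i = s_i ∘ D^{α_i^∨} - k_i` (relative to `D`). -/
def Kop (k : V → ℝ) (D : V → GA V → GA V) (i : Fin N) : GA V → GA V :=
  fun f => actA (sRefl (Δ.simple i)) (D (coroot (Δ.simple i)) f)
    - ((k (Δ.simple i) : ℝ) : ℂ) • f

/-- Evaluation of an element of `ℂ[P]` at the point `t` of the torus:
`x^μ(t) = exp(√-1 ⟨t,μ⟩)`. -/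
def evalA (f : GA V) (t : V) : ℂ :=
  f.coeff.sum fun μ c => c * Complex.exp (Complex.I * ((⟪t, μ⟫ : ℝ) : ℂ))

/-- The weight function `Δ_k(t) = ∏_{α∈R} |1 - x^α(t)|^{k_α}`. -/
def weightFn (k : V → ℝ) (t : V) : ℝ :=
  ∏ α ∈ Δ.R, ‖(1 - Complex.exp (Complex.I * ((⟪t, α⟫ : ℝ) : ℂ)))‖ ^ (k α)

/-- Coordinates on the torus `T = V/2πQ^∨` via the basis of simple coroots. -/
def coordMap (t : Fin N → ℝ) : V := ∑ i, t i • coroot (Δ.simple i)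

/-- The inner product `⟨f,g⟩_k = ∫_T f conj(g) Δ_k dμ` against the normalized Haar
measure of the torus `T = V/2πQ^∨`, computed in the coordinates given by the simple
coroots (each of period `2π`). -/
def ipk (k : V → ℝ) (f g : GA V) : ℂ :=
  (∫ t in Set.pi Set.univ (fun _ : Fin N => Set.Ico (0:ℝ) (2*Real.pi)),
    evalA f (Δ.coordMap t) * (starRingEnd ℂ) (evalA g (Δ.coordMap t)) *
      ((Δ.weightFn k (Δ.coordMap t) : ℝ) : ℂ))
  / (((2*Real.pi) ^ N : ℝ) : ℂ)

/-! ### auxiliary lemmas -/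

lemma simple_R (i : Fin N) : Δ.simple i ∈ Δ.R := Δ.Rplus_subset (Δ.simple_mem i)

lemma simple_ne (i : Fin N) : Δ.simple i ≠ 0 := Δ.nonzero _ (Δ.simple_R i)

/-- The reflection as a linear equivalence. -/
def sLin (α : V) (hα : α ≠ 0) : V ≃ₗ[ℝ] V where
  toFun := sRefl α
  invFun := sRefl α
  map_add' := sRefl_add α
  map_smul' := sRefl_smul α
  left_inv := sRefl_invol hα
  right_inv := sRefl_invol hα

lemma k_sRefl {X : Type*} {k : V → X} (hk : Δ.WInvPar k) {α β : V} (hα : α ∈ Δ.R)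
    (hβ : β ∈ Δ.R) : k (sRefl α β) = k β := by
  have hmem : sLin α (Δ.nonzero α hα) ∈ Δ.weylGroup :=
    Subgroup.subset_closure ⟨α, hα, rfl⟩
  exact hk _ hmem β hβ

lemma root_mem_Pset {β : V} (hβ : β ∈ Δ.R) : β ∈ Δ.Pset :=
  fun γ hγ => Δ.crystal γ hγ β hβ

lemma Pset_sRefl {γ : V} (hγ : γ ∈ Δ.R) {μ : V} (hμ : μ ∈ Δ.Pset) :
    sRefl γ μ ∈ Δ.Pset := by
  intro β hβ
  have h0 := Δ.nonzero γ hγ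
  obtain ⟨n, hn⟩ := hμ (sRefl γ β) (Δ.reflect_mem γ hγ β hβ)
  exact ⟨n, by rw [← hn, coroot_sRefl h0, inner_sRefl]⟩

lemma InCP_zero : Δ.InCP (0 : GA V) := by
  intro μ hμ; simp [AddMonoidAlgebra.coeff_zero] at hμ

lemma InCP_add {f g : GA V} (hf : Δ.InCP f) (hg : Δ.InCP g) : Δ.InCP (f + g) := by
  intro μ hμ
  rw [Finset.mem_coe, Finsupp.mem_support_iff, AddMonoidAlgebra.coeff_add, Finsupp.add_apply] at hμ
  by_cases h1 : f.coeff μ = 0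
  · by_cases h2 : g.coeff μ = 0
    · exact absurd (by rw [h1, h2, add_zero]) hμ
    · exact hg (Finsupp.mem_support_iff.2 h2)
  · exact hf (Finsupp.mem_support_iff.2 h1)

lemma InCP_neg {f : GA V} (hf : Δ.InCP f) : Δ.InCP (-f) := by
  intro μ hμ
  rw [Finset.mem_coe, Finsupp.mem_support_iff, AddMonoidAlgebra.coeff_neg, Finsupp.neg_apply,
    neg_ne_zero] at hμ
  exact hf (Finsupp.mem_support_iff.2 hμ)

lemma InCP_sub {f g : GA V} (hf : Δ.InCP f) (hg : Δ.InCP g) : Δ.InCP (f - g) := by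
  rw [sub_eq_add_neg]; exact Δ.InCP_add hf (Δ.InCP_neg hg)

lemma InCP_smul (c : ℂ) {f : GA V} (hf : Δ.InCP f) : Δ.InCP (c • f) := by
  intro μ hμ
  rw [Finset.mem_coe, Finsupp.mem_support_iff, AddMonoidAlgebra.coeff_smul, Finsupp.smul_apply] at hμ
  exact hf (Finsupp.mem_support_iff.2 (by intro h; rw [h, smul_zero] at hμ; exact hμ rfl))

lemma InCP_sum {ι : Type*} (S : Finset ι) (F : ι → GA V) (hF : ∀ b ∈ S, Δ.InCP (F b)) :
    Δ.InCP (∑ b ∈ S, F b) := by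
  classical
  induction S using Finset.cons_induction with
  | empty => rw [Finset.sum_empty]; exact Δ.InCP_zero
  | cons a s ha ih =>
    rw [Finset.sum_cons]
    exact Δ.InCP_add (hF a (Finset.mem_cons_self a s))
      (ih fun b hb => hF b (Finset.mem_cons_of_mem hb))

lemma InCP_actA {γ : V} (hγ : γ ∈ Δ.R) {f : GA V} (hf : Δ.InCP f) :
    Δ.InCP (actA (sRefl γ) f) := by
  intro μ hμ
  have h0 := Δ.nonzero γ hγ
  rw [Finset.mem_coe, Finsupp.mem_support_iff, actA_apply (sRefl_invol h0)] at hμ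
  have h1 : sRefl γ μ ∈ Δ.Pset := hf (Finsupp.mem_support_iff.2 hμ)
  have h2 := Δ.Pset_sRefl hγ h1
  rwa [sRefl_invol h0] at h2

lemma InCP_pd (lam : V) {f : GA V} (hf : Δ.InCP f) : Δ.InCP (pd lam f) := by
  intro μ hμ
  rw [Finset.mem_coe, Finsupp.mem_support_iff, pd_apply] at hμ
  exact hf (Finsupp.mem_support_iff.2 (by intro h; rw [h, mul_zero] at hμ; exact hμ rfl))

lemma g_inCP {α : V} (hαR : α ∈ Δ.R) {h g : GA V} (hh : Δ.InCP h)
    (heq : (Xp α - 1) * g = h) : Δ.InCP g := by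
  classical
  have hα0 := Δ.nonzero α hαR
  have hαP := Δ.root_mem_Pset hαR
  intro μ hμsup
  by_contra hμP
  rw [Finset.mem_coe] at hμsup
  set S := g.coeff.support.filter (fun ν => ν ∉ Δ.Pset) with hSdef
  have hSne : S.Nonempty := ⟨μ, Finset.mem_filter.2 ⟨hμsup, hμP⟩⟩
  obtain ⟨ν, hν, hmax⟩ := Finset.exists_max_image S (fun ν => (⟪α, ν⟫ : ℝ)) hSne
  obtain ⟨hνsup, hνP⟩ := Finset.mem_filter.1 hν
  have hνα : ν + α ∉ Δ.Pset := by
    intro hin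
    refine hνP (fun β hβ => ?_)
    obtain ⟨n1, e1⟩ := hin β hβ
    obtain ⟨n2, e2⟩ := hαP β hβ
    rw [inner_add_right] at e1
    exact ⟨n1 - n2, by push_cast; linarith⟩
  have hh0 : h.coeff (ν + α) = 0 := by
    by_contra hc
    exact hνα (hh (Finsupp.mem_support_iff.2 hc))
  have e : g.coeff ((ν + α) - α) - g.coeff (ν + α) = h.coeff (ν + α) := by
    rw [← Xp_sub_one_mul_apply, heq]
  rw [add_sub_cancel_right, hh0, sub_eq_zero] at e
  have hναsup : ν + α ∈ S := Finset.mem_filter.2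
    ⟨Finsupp.mem_support_iff.2 (by rw [← e]; exact Finsupp.mem_support_iff.1 hνsup), hνα⟩
  have := hmax (ν + α) hναsup
  rw [inner_add_right] at this
  have hpos : (0:ℝ) < ⟪α, α⟫ :=
    real_inner_self_nonneg.lt_of_ne (Ne.symm (inner_self_ne_zero.2 hα0))
  linarith

lemma sRefl_perm (i : Fin N) {β : V} (hβ : β ∈ Δ.Rplus) (hne : β ≠ Δ.simple i) :
    sRefl (Δ.simple i) β ∈ Δ.Rplus ∧ sRefl (Δ.simple i) β ≠ Δ.simple i := by
  set α := Δ.simple i with hαdef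
  have hαR := Δ.simple_R i
  have hα0 := Δ.simple_ne i
  have hαp := Δ.simple_mem i
  have hβR : β ∈ Δ.R := Δ.Rplus_subset hβ
  have hsβR : sRefl α β ∈ Δ.R := Δ.reflect_mem α hαR β hβR
  have part2 : sRefl α β ≠ α := by
    intro hEq
    have hβeq : β = -α := by
      have := congrArg (sRefl α) hEq
      rw [sRefl_invol hα0, sRefl_self hα0] at this
      exact this
    rcases Δ.decomp β hβR with ⟨_, h2⟩ | ⟨h1, _⟩
    · rw [hβeq, neg_neg] at h2; exact h2 hαp
    · exact h1 hβ
  refine ⟨?_, part2⟩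
  rcases Δ.decomp _ hsβR with ⟨h1, _⟩ | ⟨_, h2⟩
  · exact h1
  obtain ⟨c, hc⟩ := Δ.pos_combo β hβ
  obtain ⟨d, hd⟩ := Δ.pos_combo (-(sRefl α β)) h2
  set m : ℝ := ⟪coroot α, β⟫ with hm
  have hsβ : sRefl α β = β - m • α := rfl
  have hitesum : ∑ j, (if j = i then m else 0) • Δ.simple j = m • α := by
    rw [Finset.sum_eq_single_of_mem i (Finset.mem_univ i)
      (fun j _ hj => by rw [if_neg hj, zero_smul])]
    rw [if_pos rfl]
  have hg : ∀ j, ((c j : ℝ) + (d j : ℝ)) - (if j = i then m else 0) = 0 := by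
    apply Fintype.linearIndependent_iff.1 Δ.simple_li
    have expand : ∑ j, (((c j : ℝ) + (d j : ℝ)) - (if j = i then m else 0)) • Δ.simple j
        = (∑ j, (c j : ℝ) • Δ.simple j) + (∑ j, (d j : ℝ) • Δ.simple j)
          - ∑ j, (if j = i then m else 0) • Δ.simple j := by
      rw [← Finset.sum_add_distrib, ← Finset.sum_sub_distrib]
      exact Finset.sum_congr rfl fun j _ => by rw [sub_smul, add_smul]
    rw [expand, ← hc, ← hd, hitesum, hsβ]
    module
  have hcd : ∀ j, j ≠ i → c j = 0 := by
    intro j hj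
    have := hg j
    rw [if_neg hj, sub_zero] at this
    have h1 : (0:ℝ) ≤ (c j : ℝ) := Nat.cast_nonneg _
    have h2 : (0:ℝ) ≤ (d j : ℝ) := Nat.cast_nonneg _
    have : (c j : ℝ) = 0 := by linarith
    exact_mod_cast this
  have hβci : β = (c i : ℝ) • α := by
    rw [hc, Finset.sum_eq_single_of_mem i (Finset.mem_univ i)
      (fun j _ hj => by rw [hcd j hj, Nat.cast_zero, zero_smul])]
  rcases Δ.reduced α hαR (c i) (by rw [← hβci]; exact hβR) with h1 | h1
  · exfalso; apply hne; rw [hβci, h1, one_smul]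
  · exfalso
    have : (0:ℝ) ≤ (c i : ℝ) := Nat.cast_nonneg _
    rw [h1] at this; linarith

lemma sum_sRefl (i : Fin N) {M : Type*} [AddCommMonoid M] (G : V → M) :
    ∑ β ∈ Δ.Rplus.erase (Δ.simple i), G (sRefl (Δ.simple i) β)
      = ∑ β ∈ Δ.Rplus.erase (Δ.simple i), G β := by
  have hα0 := Δ.simple_ne i
  have hmem : ∀ β ∈ Δ.Rplus.erase (Δ.simple i),
      sRefl (Δ.simple i) β ∈ Δ.Rplus.erase (Δ.simple i) := by
    intro β hβ
    obtain ⟨h1, h2⟩ := Finset.mem_erase.1 hβ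
    obtain ⟨m1, m2⟩ := Δ.sRefl_perm i h2 h1
    exact Finset.mem_erase.2 ⟨m2, m1⟩
  exact Finset.sum_nbij' (fun β => sRefl (Δ.simple i) β) (fun β => sRefl (Δ.simple i) β)
    hmem hmem (fun β _ => sRefl_invol hα0 β) (fun β _ => sRefl_invol hα0 β)
    (fun β _ => rfl)

lemma inner_coroot_rhok (k : V → ℝ) (hk : Δ.WInvPar k) (i : Fin N) :
    (⟪coroot (Δ.simple i), Δ.rhok k⟫ : ℝ) = k (Δ.simple i) := by
  set α := Δ.simple i with hαdef
  have hαR := Δ.simple_R i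
  have hα0 := Δ.simple_ne i
  have hαp := Δ.simple_mem i
  have hT : ∑ β ∈ Δ.Rplus.erase α, k β * ⟪coroot α, β⟫ = 0 := by
    have h1 : ∀ β ∈ Δ.Rplus.erase α,
        (fun γ => k γ * ⟪coroot α, γ⟫) (sRefl α β) = -(k β * ⟪coroot α, β⟫) := by
      intro β hβ
      obtain ⟨h1, h2⟩ := Finset.mem_erase.1 hβ
      have hβR := Δ.Rplus_subset h2
      simp only
      rw [Δ.k_sRefl hk hαR hβR, ← inner_sRefl, sRefl_coroot hα0, inner_neg_left]
      ring
    have h2 := Δ.sum_sRefl i (fun γ => k γ * ⟪coroot α, γ⟫)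
    rw [Finset.sum_congr rfl h1, Finset.sum_neg_distrib] at h2
    linarith [h2]
  have hsplit : ∑ β ∈ Δ.Rplus, k β * ⟪coroot α, β⟫
      = k α * ⟪coroot α, α⟫ + ∑ β ∈ Δ.Rplus.erase α, k β * ⟪coroot α, β⟫ :=
    (Finset.add_sum_erase _ _ hαp).symm
  rw [RootSystemData.rhok, real_inner_smul_right, inner_sum]
  rw [Finset.sum_congr rfl fun β _ => real_inner_smul_right (coroot α) β (k β)]
  rw [hsplit, hT, inner_coroot_self hα0]
  ring

lemma D_inCP {k : V → ℝ} {lam : V} {D : GA V → GA V} (hD : Δ.IsDC k lam D)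
    {f : GA V} (hf : Δ.InCP f) : Δ.InCP (D f) := by
  obtain ⟨g, hg, e⟩ := hD f hf
  rw [e]
  refine Δ.InCP_add (Δ.InCP_add (Δ.InCP_pd lam hf)
    (Δ.InCP_sum _ _ fun β hβ => Δ.InCP_smul _ ?_)) (Δ.InCP_smul _ hf)
  have hβR := Δ.Rplus_subset hβ
  exact Δ.g_inCP hβR (Δ.InCP_sub hf (Δ.InCP_actA hβR hf)) (hg β hβ)

lemma D_linear {k : V → ℝ} {lam : V} {D : GA V → GA V} (hD : Δ.IsDC k lam D)
    {f₁ f₂ : GA V} (hf₁ : Δ.InCP f₁) (hf₂ : Δ.InCP f₂) (c : ℂ) :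
    D (f₁ - c • f₂) = D f₁ - c • D f₂ := by
  obtain ⟨g₁, hg₁, e₁⟩ := hD f₁ hf₁
  obtain ⟨g₂, hg₂, e₂⟩ := hD f₂ hf₂
  obtain ⟨g₃, hg₃, e₃⟩ := hD (f₁ - c • f₂) (Δ.InCP_sub hf₁ (Δ.InCP_smul c hf₂))
  rw [e₁, e₂, e₃]
  have hgeq : ∀ β ∈ Δ.Rplus, g₃ β = g₁ β - c • g₂ β := by
    intro β hβ
    have hβ0 := Δ.nonzero β (Δ.Rplus_subset hβ)
    apply Xp_cancel hβ0
    rw [hg₃ β hβ, mul_sub, mul_smul_comm, hg₁ β hβ, hg₂ β hβ,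
      actA_sub (sRefl_invol hβ0), actA_smul (sRefl_invol hβ0)]
    module
  have hpd : pd lam (f₁ - c • f₂) = pd lam f₁ - c • pd lam f₂ := by
    ext ν
    rw [pd_apply, AddMonoidAlgebra.coeff_sub, Finsupp.sub_apply, AddMonoidAlgebra.coeff_smul,
      Finsupp.smul_apply, AddMonoidAlgebra.coeff_sub, Finsupp.sub_apply,
      AddMonoidAlgebra.coeff_smul, Finsupp.smul_apply, pd_apply, pd_apply]
    simp only [smul_eq_mul]
    ring
  rw [hpd, Finset.sum_congr rfl (fun β hβ => by rw [hgeq β hβ])]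
  have h1 : ∑ β ∈ Δ.Rplus, ((k β * ⟪lam, β⟫ : ℝ) : ℂ) • (g₁ β - c • g₂ β)
      = (∑ β ∈ Δ.Rplus, ((k β * ⟪lam, β⟫ : ℝ) : ℂ) • g₁ β)
        - c • ∑ β ∈ Δ.Rplus, ((k β * ⟪lam, β⟫ : ℝ) : ℂ) • g₂ β := by
    rw [Finset.smul_sum, ← Finset.sum_sub_distrib]
    exact Finset.sum_congr rfl fun β _ => by rw [smul_sub, smul_comm]
  rw [h1]
  module

lemma key_identity (k : V → ℝ) (hk : Δ.WInvPar k) (i : Fin N) (D : GA V → GA V)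
    (hD : Δ.IsDC k (coroot (Δ.simple i)) D) {h : GA V} (hh : Δ.InCP h) :
    actA (sRefl (Δ.simple i)) (D (actA (sRefl (Δ.simple i)) h)) + D h
      = ((2 * k (Δ.simple i) : ℝ) : ℂ) • actA (sRefl (Δ.simple i)) h := by
  set α := Δ.simple i with hαdef
  have hα0 := Δ.simple_ne i
  have hαR := Δ.simple_R i
  have hαp := Δ.simple_mem i
  have hinv : Function.Involutive (sRefl α) := sRefl_invol hα0
  obtain ⟨g₁, hg₁, e₁⟩ := hD (actA (sRefl α) h) (Δ.InCP_actA hαR hh)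
  obtain ⟨g₂, hg₂, e₂⟩ := hD h hh
  have hgα : g₁ α = -g₂ α := by
    apply Xp_cancel hα0
    rw [hg₁ α hαp, actA_actA hinv, mul_neg, hg₂ α hαp, neg_sub]
  have hXg : Xp α * g₂ α = h - actA (sRefl α) h + g₂ α := by
    linear_combination hg₂ α hαp
  have hsg : actA (sRefl α) (g₂ α) = Xp α * g₂ α := by
    apply Xp_cancel hα0
    have eq1 : (Xp (-α) - 1) * actA (sRefl α) (g₂ α) = actA (sRefl α) h - h := by
      have e := congrArg (actA (sRefl α)) (hg₂ α hαp)
      rw [actA_mul, actA_sub hinv, actA_sub hinv, actA_Xp, actA_one, sRefl_self hα0,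
        actA_actA hinv] at e
      exact e
    have hXX := Xp_mul_Xp_neg α
    linear_combination (-Xp α) * eq1 + (-Xp α) * (hg₂ α hαp)
      + (actA (sRefl α) (g₂ α)) * hXX
  have hconj : ∀ β ∈ Δ.Rplus.erase α, actA (sRefl α) (g₁ β) = g₂ (sRefl α β) := by
    intro β hβT
    obtain ⟨hβne, hβp⟩ := Finset.mem_erase.1 hβT
    have hβ0 : β ≠ 0 := Δ.nonzero β (Δ.Rplus_subset hβp)
    obtain ⟨hsβp, _⟩ := Δ.sRefl_perm i hβp hβne
    have hsβ0 : sRefl α β ≠ 0 := Δ.nonzero _ (Δ.Rplus_subset hsβp)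
    apply Xp_cancel hsβ0
    have e := congrArg (actA (sRefl α)) (hg₁ β hβp)
    rw [actA_mul, actA_sub hinv, actA_sub hinv, actA_Xp, actA_one, actA_actA hinv] at e
    rw [e, hg₂ (sRefl α β) hsβp]
    congr 1
    ext ν
    rw [actA_apply hinv, actA_apply (sRefl_invol hβ0), actA_apply hinv,
      actA_apply (sRefl_invol hsβ0)]
    exact congrArg h.coeff (sRefl_conj hα0 β ν)
  have hsumT : ∑ β ∈ Δ.Rplus.erase α, ((k β * ⟪coroot α, β⟫ : ℝ) : ℂ) • g₂ (sRefl α β)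
      = - ∑ β ∈ Δ.Rplus.erase α, ((k β * ⟪coroot α, β⟫ : ℝ) : ℂ) • g₂ β := by
    have h1 : ∀ β ∈ Δ.Rplus.erase α, ((k β * ⟪coroot α, β⟫ : ℝ) : ℂ) • g₂ (sRefl α β)
        = (fun γ => -(((k γ * ⟪coroot α, γ⟫ : ℝ) : ℂ) • g₂ γ)) (sRefl α β) := by
      intro β hβT
      obtain ⟨hβne, hβp⟩ := Finset.mem_erase.1 hβT
      have hβR := Δ.Rplus_subset hβp
      simp only
      rw [Δ.k_sRefl hk hαR hβR]
      rw [show (⟪coroot α, sRefl α β⟫ : ℝ) = -⟪coroot α, β⟫ by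
        rw [← inner_sRefl, sRefl_coroot hα0, inner_neg_left]]
      rw [show ((k β * -⟪coroot α, β⟫ : ℝ) : ℂ) = -((k β * ⟪coroot α, β⟫ : ℝ) : ℂ) by
        push_cast; ring]
      rw [neg_smul, neg_neg]
    rw [Finset.sum_congr rfl h1, Δ.sum_sRefl i
      (fun γ => -(((k γ * ⟪coroot α, γ⟫ : ℝ) : ℂ) • g₂ γ)), Finset.sum_neg_distrib]
  -- main computation
  rw [e₁, e₂]
  simp only [actA_add hinv, actA_smul hinv, actA_sum hinv]
  rw [actA_pd hα0]
  simp only [actA_actA hinv]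
  rw [sRefl_coroot hα0, pd_neg_lam]
  rw [← Finset.add_sum_erase _
    (fun β => ((k β * ⟪coroot α, β⟫ : ℝ) : ℂ) • actA (sRefl α) (g₁ β)) hαp]
  rw [← Finset.add_sum_erase _ (fun β => ((k β * ⟪coroot α, β⟫ : ℝ) : ℂ) • g₂ β) hαp]
  have hs1 : ∑ β ∈ Δ.Rplus.erase α, ((k β * ⟪coroot α, β⟫ : ℝ) : ℂ) • actA (sRefl α) (g₁ β)
      = ∑ β ∈ Δ.Rplus.erase α, ((k β * ⟪coroot α, β⟫ : ℝ) : ℂ) • g₂ (sRefl α β) :=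
    Finset.sum_congr rfl fun β hβ => by rw [hconj β hβ]
  rw [hs1, hsumT, hgα, actA_neg hinv, hsg, hXg, Δ.inner_coroot_rhok k hk i,
    inner_coroot_self hα0]
  push_cast
  simp only [← hαdef, actA_actA hinv]
  module

end RootSystemData

end HO

namespace HO

/-- The square of the intertwiner: `K_i² = k_i² - (D^{α_i^∨})²`
as operators on `ℂ[P]`. -/
theorem statement5 {V : Type*} [NormedAddCommGroup V] [InnerProductSpace ℝ V]
    [FiniteDimensional ℝ V] {N : ℕ} (Δ : RootSystemData V N)
    (k : V → ℝ) (hk : Δ.WInvPar k)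
    (D : V → GA V → GA V) (hD : ∀ lam : V, Δ.IsDC k lam (D lam))
    (i : Fin N) (f : GA V) (hf : Δ.InCP f) :
    Δ.Kop k D i (Δ.Kop k D i f)
      = (((k (Δ.simple i)) ^ 2 : ℝ) : ℂ) • f
        - D (coroot (Δ.simple i)) (D (coroot (Δ.simple i)) f) := by
  have hα0 := Δ.simple_ne i
  have hαR := Δ.simple_R i
  have hinv := sRefl_invol hα0
  have hDf : Δ.InCP (D (coroot (Δ.simple i)) f) := Δ.D_inCP (hD _) hf
  have hsDf : Δ.InCP (actA (sRefl (Δ.simple i)) (D (coroot (Δ.simple i)) f)) :=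
    Δ.InCP_actA hαR hDf
  simp only [RootSystemData.Kop]
  rw [Δ.D_linear (hD _) hsDf hf ((k (Δ.simple i) : ℝ) : ℂ)]
  rw [actA_sub hinv, actA_smul hinv]
  have hkey := Δ.key_identity k hk i (D (coroot (Δ.simple i))) (hD _) hDf
  rw [eq_sub_of_add_eq hkey]
  push_cast
  module


end HO
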